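/- arXiv:2507.20319 — 6 statements merged into one kernel-verified Lean document; each statement's English description precedes it below -/
import Mathlib

section
/- Let G be an abelian group (written additively) and let P ⊆ G be a subsemigroup containing 0 that is finitely generated as a semigroup and satisfies P − P = G. Then for every ideal I of P there exist n ≥ 1 and elements x₁, …, xₙ ∈ I such that I = ⋃_{i=1}^{n} (xᵢ + P). -/
/-- A partially well-ordered set has a finite "basis": a finite subset such that every
element of the set dominates some element of the basis. -/
lemma IsPWO.exists_finite_basis {α : Type*} [Preorder α] (s : Set α) (h : s.IsPWO) :
    ∃ T : Finset α, ↑T ⊆ s ∧ ∀ x ∈ s, ∃ t ∈ T, t ≤ x := by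
  by_contra hcon
  push_neg at hcon
  classical
  have hbad : ∀ T : Finset α, ∃ x, ↑T ⊆ s → x ∈ s ∧ ∀ t ∈ T, ¬ t ≤ x := by
    intro T
    by_cases hT : ↑T ⊆ s
    · obtain ⟨x, hx, hx2⟩ := hcon T hT
      exact ⟨x, fun _ => ⟨hx, hx2⟩⟩
    · obtain ⟨x, hx, -⟩ := Set.not_subset.mp hT
      exact ⟨x, fun h => (hT h).elim⟩
  choose g hg using hbad
  have hg1 : ∀ T : Finset α, ↑T ⊆ s → g T ∈ s := fun T hT => (hg T hT).1
  have hg2 : ∀ T : Finset α, ↑T ⊆ s → ∀ t ∈ T, ¬ t ≤ g T := fun T hT => (hg T hT).2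
  -- build a bad sequence
  let T : ℕ → Finset α := fun n => Nat.rec (motive := fun _ => Finset α) ∅ (fun _ T => insert (g T) T) n
  have hTsub : ∀ n, (T n : Set α) ⊆ s := by
    intro n
    induction n with
    | zero => simp [T]
    | succ n ih =>
      intro x hx
      simp only [T, Finset.coe_insert, Set.mem_insert_iff] at hx
      rcases hx with rfl | hx
      · exact hg1 _ ih
      · exact ih hx
  set f : ℕ → α := fun n => g (T n) with hf
  have hfs : ∀ n, f n ∈ s := fun n => hg1 _ (hTsub n)
  have hmono : ∀ m n, m ≤ n → T m ⊆ T n := by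
    intro m n hmn
    induction n with
    | zero => simp_all
    | succ n ih =>
      rcases Nat.lt_or_ge m (n+1) with h1 | h1
      · exact (ih (Nat.lt_succ_iff.mp h1)).trans (Finset.subset_insert _ _)
      · have : m = n + 1 := le_antisymm hmn h1
        subst this; rfl
  have hmem : ∀ m n, m < n → f m ∈ T n := by
    intro m n hmn
    have : f m ∈ T (m+1) := Finset.mem_insert_self _ _
    exact hmono (m+1) n hmn this
  obtain ⟨m, n, hmn, hle⟩ := Set.PartiallyWellOrderedOn.exists_lt h hfs
  exact hg2 (T n) (hTsub n) (f m) (hmem m n hmn) hle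

/-- Let `G` be an abelian group and `P ⊆ G` a subsemigroup containing `0`
(modelled as an `AddSubmonoid`) that is finitely generated as a semigroup and satisfies
`P − P = G`. Then every ideal `I` of `P` (a nonempty subset of `P` with `I + P ⊆ I`) is a
finite union `I = ⋃_{i=1}^{n} (xᵢ + P)` with `x₁, …, xₙ ∈ I`. -/
theorem ideal_is_finite_union_of_translates
    {G : Type*} [AddCommGroup G] (P : AddSubmonoid G)
    (hFG : P.FG)
    (hPP : ∀ g : G, ∃ p ∈ P, ∃ q ∈ P, g = p - q)
    (I : Set G) (hne : I.Nonempty) (hsub : I ⊆ (P : Set G))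
    (hideal : ∀ x ∈ I, ∀ p ∈ P, x + p ∈ I) :
    ∃ n : ℕ, 1 ≤ n ∧ ∃ x : Fin n → G, (∀ i, x i ∈ I) ∧
      I = ⋃ i : Fin n, (fun p => x i + p) '' (P : Set G) := by
  classical
  obtain ⟨S, hS⟩ := hFG
  -- the evaluation map from multiplicities to G
  set φ : (↥S → ℕ) → G := fun a => ∑ i : ↥S, a i • (i : G) with hφ
  have hSsubP : (↑S : Set G) ⊆ (P : Set G) := by
    rw [← hS]; exact AddSubmonoid.subset_closure
  have hφP : ∀ a, φ a ∈ P := by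
    intro a
    apply AddSubmonoid.sum_mem
    intro i _
    exact AddSubmonoid.nsmul_mem _ (hSsubP i.2) _
  have hφadd : ∀ a b, φ (a + b) = φ a + φ b := by
    intro a b
    simp only [hφ, Pi.add_apply, add_smul, Finset.sum_add_distrib]
  -- surjectivity onto P
  have hsurj : ∀ p ∈ P, ∃ a, φ a = p := by
    intro p hp
    rw [← hS] at hp
    induction hp using AddSubmonoid.closure_induction with
    | mem x hx =>
      refine ⟨fun i => if (i : G) = x then 1 else 0, ?_⟩
      have hxS : x ∈ S := hx
      show (∑ i : ↥S, (if (i : G) = x then 1 else 0) • (i : G)) = x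
      rw [Finset.sum_eq_single (⟨x, hxS⟩ : ↥S)]
      · simp
      · intro b _ hb
        have : (b : G) ≠ x := by
          intro h; apply hb; exact Subtype.ext h
        simp [this]
      · simp
    | zero => exact ⟨0, by simp [hφ]⟩
    | add x y _ _ hx hy =>
      obtain ⟨a, ha⟩ := hx
      obtain ⟨b, hb⟩ := hy
      exact ⟨a + b, by rw [hφadd, ha, hb]⟩
  -- the preimage ideal in ℕ^S
  set J : Set (↥S → ℕ) := {a | φ a ∈ I} with hJ
  have hJup : ∀ a ∈ J, ∀ b, a ≤ b → b ∈ J := by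
    intro a ha b hab
    have hb : b = a + (b - a) := by
      funext i
      simp only [Pi.add_apply, Pi.sub_apply]
      have h1 : a i ≤ b i := hab i
      omega
    rw [hJ, Set.mem_setOf_eq, hb, hφadd]
    exact hideal _ ha _ (hφP _)
  obtain ⟨T, hTJ, hTbasis⟩ := IsPWO.exists_finite_basis J (by haveI : IsWellOrder ℕ (· < ·) := inferInstance; exact Set.isPWO_of_wellQuasiOrderedLE J)
  -- T is nonempty
  obtain ⟨y0, hy0⟩ := hne
  obtain ⟨a0, ha0⟩ := hsurj y0 (hsub hy0)
  have ha0J : a0 ∈ J := by rw [hJ, Set.mem_setOf_eq, ha0]; exact hy0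
  obtain ⟨t0, ht0T, _⟩ := hTbasis a0 ha0J
  have hTne : T.Nonempty := ⟨t0, ht0T⟩
  refine ⟨T.card, Finset.card_pos.mpr hTne, fun i => φ (T.equivFin.symm i), ?_, ?_⟩
  · intro i
    exact hTJ (T.equivFin.symm i).2
  · ext y
    constructor
    · intro hy
      obtain ⟨a, ha⟩ := hsurj y (hsub hy)
      have haJ : a ∈ J := by rw [hJ, Set.mem_setOf_eq, ha]; exact hy
      obtain ⟨t, htT, hta⟩ := hTbasis a haJ
      refine Set.mem_iUnion.mpr ⟨T.equivFin ⟨t, htT⟩, ⟨φ (a - t), hφP _, ?_⟩⟩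
      simp only [Equiv.symm_apply_apply]
      rw [← hφadd, ← ha]
      congr 1
      funext i
      simp only [Pi.add_apply, Pi.sub_apply]
      have h1 : t i ≤ a i := hta i
      omega
    · intro hy
      obtain ⟨i, p, hp, hpy⟩ := Set.mem_iUnion.mp hy
      subst hpy
      exact hideal _ (hTJ (T.equivFin.symm i).2) _ hp
end

section
/- Let G be an abelian group (written additively) and let P ⊆ G be a subsemigroup containing 0 that is finitely generated as a semigroup and satisfies P − P = G. Then for all g, h ∈ G the intersection (g + P) ∩ (h + P) is nonempty, and there exist n ≥ 1 and elements y₁, …, yₙ ∈ G such that (g + P) ∩ (h + P) = ⋃_{i=1}^{n} (yᵢ + P). -/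
open Set

lemma pi_nat_isPWO {k : ℕ} (s : Set (Fin k → ℕ)) : s.IsPWO :=
  Set.isPWO_of_wellQuasiOrderedLE s

/-- Every element of a set in `Fin k → ℕ` lies above a minimal element. -/
lemma exists_minimal_le {k : ℕ} (X : Set (Fin k → ℕ)) {x : Fin k → ℕ} (hx : x ∈ X) :
    ∃ m ∈ X, m ≤ x ∧ ∀ y ∈ X, y ≤ m → y = m := by
  have hwf : WellFounded ((· < ·) : (Fin k → ℕ) → (Fin k → ℕ) → Prop) :=
    (Set.isWF_univ_iff.mp (pi_nat_isPWO (Set.univ)).isWF).wf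
  induction x using hwf.induction with
  | _ x ih =>
    by_cases hmin : ∀ y ∈ X, y ≤ x → y = x
    · exact ⟨x, hx, le_rfl, hmin⟩
    · push_neg at hmin
      obtain ⟨y, hyX, hyx, hne⟩ := hmin
      obtain ⟨m, hm, hmy, hmmin⟩ := ih y (lt_of_le_of_ne hyx hne) hyX
      exact ⟨m, hm, hmy.trans hyx, hmmin⟩

/-- The set of minimal elements of a set in `Fin k → ℕ` is finite (Dickson's lemma). -/
lemma minimals_finite {k : ℕ} (X : Set (Fin k → ℕ)) :
    {m | m ∈ X ∧ ∀ y ∈ X, y ≤ m → y = m}.Finite := by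
  have hA : IsAntichain (· ≤ ·) {m | m ∈ X ∧ ∀ y ∈ X, y ≤ m → y = m} := by
    intro a ha b hb hne hab
    exact hne (hb.2 a ha.1 hab)
  exact hA.finite_of_partiallyWellOrderedOn (pi_nat_isPWO _)

/-- Let `G` be an abelian group and `P ⊆ G` a subsemigroup containing `0`
(modelled as an `AddSubmonoid`) that is finitely generated as a semigroup and satisfies
`P − P = G`. Then for all `g, h ∈ G` the intersection `(g + P) ∩ (h + P)` is nonempty and is
a finite union `⋃_{i=1}^{n} (yᵢ + P)` for some `y₁, …, yₙ ∈ G`. -/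
theorem translate_inter_translate_eq_finite_union
    {G : Type*} [AddCommGroup G] (P : AddSubmonoid G)
    (hFG : P.FG)
    (hPP : ∀ g : G, ∃ p ∈ P, ∃ q ∈ P, g = p - q) (g h : G) :
    (((fun p => g + p) '' (P : Set G)) ∩ ((fun p => h + p) '' (P : Set G))).Nonempty ∧
      ∃ n : ℕ, 1 ≤ n ∧ ∃ y : Fin n → G,
        ((fun p => g + p) '' (P : Set G)) ∩ ((fun p => h + p) '' (P : Set G)) =
          ⋃ i : Fin n, (fun p => y i + p) '' (P : Set G) := by
  classical
  obtain ⟨S, hS⟩ := hFG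
  set k := S.card with hk
  set a : Fin k → G := fun i => ((S.equivFin.symm i : S) : G) with ha
  set f : (Fin k → ℕ) → G := fun x => ∑ i, x i • a i with hf
  have hfadd : ∀ x y, f (x + y) = f x + f y := by
    intro x y
    simp [hf, add_nsmul, Finset.sum_add_distrib]
  have haS : ∀ i, a i ∈ S := fun i => (S.equivFin.symm i).2
  have hfP : ∀ x, f x ∈ P := by
    intro x
    exact AddSubmonoid.sum_mem _ fun i _ =>
      AddSubmonoid.nsmul_mem _ (by rw [← hS]; exact AddSubmonoid.subset_closure (haS i)) _
  have hPf : ∀ p ∈ P, ∃ x, f x = p := by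
    intro p hp
    rw [← hS] at hp
    induction hp using AddSubmonoid.closure_induction with
    | mem s hs =>
      refine ⟨Pi.single (S.equivFin ⟨s, hs⟩) 1, ?_⟩
      simp only [hf]
      rw [Finset.sum_eq_single (S.equivFin ⟨s, hs⟩)]
      · simp [ha]
      · intro j _ hj
        simp [Pi.single_apply, hj.symm]
      · simp
    | zero => exact ⟨0, by simp [hf]⟩
    | add p q _ _ hp hq =>
      obtain ⟨x, hx⟩ := hp; obtain ⟨y, hy⟩ := hq
      exact ⟨x + y, by rw [hfadd, hx, hy]⟩
  set c := h - g with hc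
  set X : Set (Fin k → ℕ) := {x | ∃ q ∈ P, f x = c + q} with hX
  -- X is an upper set
  have hXup : ∀ x ∈ X, ∀ x', x ≤ x' → x' ∈ X := by
    intro x hx x' hle
    obtain ⟨q, hq, hfx⟩ := hx
    set d : Fin k → ℕ := fun i => x' i - x i with hd
    have hxd : x + d = x' := by
      funext i
      exact Nat.add_sub_cancel' (hle i)
    refine ⟨q + f d, AddSubmonoid.add_mem _ hq (hfP d), ?_⟩
    rw [← hxd, hfadd, hfx, add_assoc]
  -- X is nonempty
  obtain ⟨p₀, hp₀, q₀, hq₀, hcpq⟩ := hPP c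
  obtain ⟨x₀, hx₀⟩ := hPf p₀ hp₀
  have hx₀X : x₀ ∈ X := ⟨q₀, hq₀, by rw [hx₀, hcpq]; abel⟩
  -- minimal elements
  set M : Set (Fin k → ℕ) := {m | m ∈ X ∧ ∀ y ∈ X, y ≤ m → y = m} with hM
  have hMfin : M.Finite := minimals_finite X
  obtain ⟨m₀, hm₀, _, hm₀min⟩ := exists_minimal_le X hx₀X
  have hMne : hMfin.toFinset.Nonempty := ⟨m₀, hMfin.mem_toFinset.mpr ⟨hm₀, hm₀min⟩⟩
  set n := hMfin.toFinset.card with hn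
  have hn1 : 1 ≤ n := Finset.card_pos.mpr hMne
  set e := hMfin.toFinset.equivFin with he
  set y : Fin n → G := fun i => g + f ((e.symm i : hMfin.toFinset)) with hy
  constructor
  · refine ⟨g + p₀, ⟨p₀, hp₀, rfl⟩, ⟨q₀, hq₀, ?_⟩⟩
    have h1 : h - g = p₀ - q₀ := hcpq
    simp only []
    rw [eq_add_of_sub_eq h1]
    abel
  refine ⟨n, hn1, y, ?_⟩
  ext x
  simp only [Set.mem_inter_iff, Set.mem_image, Set.mem_iUnion, SetLike.mem_coe]
  constructor
  · rintro ⟨⟨p, hp, rfl⟩, ⟨q, hq, hgq⟩⟩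
    have h1 : h + q = g + p := hgq
    have hpc : p = c + q := add_left_cancel (a := g) (by rw [hc, ← h1]; abel)
    obtain ⟨xp, hxp⟩ := hPf p hp
    have hxpX : xp ∈ X := ⟨q, hq, by rw [hxp, hpc]⟩
    obtain ⟨m, hmX, hmle, hmmin⟩ := exists_minimal_le X hxpX
    have hmM : m ∈ hMfin.toFinset := hMfin.mem_toFinset.mpr ⟨hmX, hmmin⟩
    set d : Fin k → ℕ := fun i => xp i - m i with hd
    have hmd : m + d = xp := by
      funext i
      exact Nat.add_sub_cancel' (hmle i)
    refine ⟨e ⟨m, hmM⟩, f d, hfP d, ?_⟩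
    have : (e.symm (e ⟨m, hmM⟩) : Fin k → ℕ) = m := by rw [Equiv.symm_apply_apply]
    rw [hy]
    simp only [this]
    rw [add_assoc, ← hfadd, hmd, hxp]
  · rintro ⟨i, p, hp, rfl⟩
    obtain ⟨hmX, -⟩ := hMfin.mem_toFinset.mp (e.symm i).2
    obtain ⟨q, hq, hfm⟩ := hmX
    refine ⟨⟨f (e.symm i : hMfin.toFinset) + p,
        AddSubmonoid.add_mem _ (hfP _) hp, by show g + _ = g + _ + _; abel⟩,
      ⟨q + p, AddSubmonoid.add_mem _ hq hp, ?_⟩⟩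
    show h + (q + p) = g + f (e.symm i : hMfin.toFinset) + p
    rw [hfm, hc]
    abel
end

section
/- Let G be a countable group and P ⊆ G a subsemigroup containing the identity e. Then every element F of Ω̃ is hereditary; that is, if F ∈ Ω̃, x ∈ F, and y ≤ x (i.e. x·y⁻¹ ∈ P), then y ∈ F. Equivalently, P⁻¹F ⊆ F for every F ∈ Ω̃. -/
/-! Setup: the Wiener–Hopf space of a subsemigroup `P` (with identity) of a group `G`.
For `x, y ∈ G` we write `x ≤ y` for `y * x⁻¹ ∈ P`.  Subsets of `G` are identified with
their `Bool`-valued indicator functions, giving the power set the topology of pointwise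
convergence (product topology on `G → Bool` with `Bool` discrete). -/

/-- `P⁻¹g = {x ∈ G : x ≤ g} = {p⁻¹ * g : p ∈ P}`. -/
def pinvSet {G : Type*} [Group G] (P : Submonoid G) (g : G) : Set G :=
  {x : G | g * x⁻¹ ∈ P}

/-- The topology of pointwise convergence on the power set of `G`, obtained by
identifying a subset with its `Bool`-valued indicator function. -/
noncomputable def powerSetTopology (G : Type*) : TopologicalSpace (Set G) :=
  TopologicalSpace.induced (fun F : Set G => F.boolIndicator) inferInstance

/-- `Ω := closure {P⁻¹a : a ∈ P}` in the topology of pointwise convergence. -/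
noncomputable def whOmega {G : Type*} [Group G] (P : Submonoid G) : Set (Set G) :=
  @closure _ (powerSetTopology G) {F : Set G | ∃ a ∈ P, F = pinvSet P a}

/-- `Ωg := {Fg : F ∈ Ω}`. -/
noncomputable def whOmegaMul {G : Type*} [Group G] (P : Submonoid G) (g : G) :
    Set (Set G) :=
  {F : Set G | ∃ F₀ ∈ whOmega P, F = (fun x => x * g) '' F₀}

/-- `Ω̃ := ⋃_{g ∈ G} Ωg`. -/
noncomputable def whOmegaTilde {G : Type*} [Group G] (P : Submonoid G) : Set (Set G) :=
  ⋃ g : G, whOmegaMul P g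

section Aux

variable {G : Type*} [Group G] (P : Submonoid G)

private lemma mem_clopen (x : G) :
    @IsClopen (Set G) (powerSetTopology G) {F : Set G | x ∈ F} := by
  letI := powerSetTopology G
  have hcont : Continuous (fun F : Set G => F.boolIndicator x) := by
    exact (continuous_apply x).comp (@continuous_induced_dom (Set G) (G → Bool) (fun F : Set G => F.boolIndicator) _)
  have : {F : Set G | x ∈ F} = (fun F : Set G => F.boolIndicator x) ⁻¹' {true} := by
    ext F
    simp [Set.boolIndicator, Set.mem_preimage]
  rw [this]
  exact (isClopen_discrete {true}).preimage hcont

private lemma hereditary_closed :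
    @IsClosed (Set G) (powerSetTopology G)
      {F : Set G | ∀ x ∈ F, ∀ y : G, x * y⁻¹ ∈ P → y ∈ F} := by
  letI := powerSetTopology G
  have : {F : Set G | ∀ x ∈ F, ∀ y : G, x * y⁻¹ ∈ P → y ∈ F}
      = ⋂ (x : G), ⋂ (y : G), ⋂ (_ : x * y⁻¹ ∈ P),
          ({F : Set G | x ∈ F} ᶜ ∪ {F : Set G | y ∈ F}) := by
    ext F
    simp only [Set.mem_iInter, Set.mem_setOf_eq, Set.mem_union, Set.mem_compl_iff]
    constructor
    · intro h x y hp
      by_cases hx : x ∈ F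
      · exact Or.inr (h x hx y hp)
      · exact Or.inl hx
    · intro h x hx y hp
      rcases h x y hp with h' | h'
      · exact absurd hx h'
      · exact h'
  rw [this]
  refine isClosed_iInter fun x => isClosed_iInter fun y => isClosed_iInter fun _ => ?_
  exact ((mem_clopen x).compl.isClosed).union (mem_clopen y).isClosed

private lemma whOmega_hereditary {F : Set G} (hF : F ∈ whOmega P) :
    ∀ x ∈ F, ∀ y : G, x * y⁻¹ ∈ P → y ∈ F := by
  letI := powerSetTopology G
  have hsub : {F : Set G | ∃ a ∈ P, F = pinvSet P a}
      ⊆ {F : Set G | ∀ x ∈ F, ∀ y : G, x * y⁻¹ ∈ P → y ∈ F} := by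
    rintro F₀ ⟨a, _, rfl⟩ x hx y hp
    have : a * y⁻¹ = (a * x⁻¹) * (x * y⁻¹) := by group
    show a * y⁻¹ ∈ P
    rw [this]
    exact P.mul_mem hx hp
  exact closure_minimal hsub (hereditary_closed P) hF

end Aux

/-- Let `G` be a countable group and `P ⊆ G` a subsemigroup containing
the identity.  Every `F ∈ Ω̃` is hereditary: if `x ∈ F` and `y ≤ x` (i.e. `x * y⁻¹ ∈ P`)
then `y ∈ F`; equivalently `P⁻¹F ⊆ F`. -/
theorem whOmegaTilde_hereditary {G : Type*} [Group G] [Countable G] (P : Submonoid G)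
    (F : Set G) (hF : F ∈ whOmegaTilde P) :
    (∀ x ∈ F, ∀ y : G, x * y⁻¹ ∈ P → y ∈ F) ∧
      {z : G | ∃ p ∈ P, ∃ x ∈ F, z = p⁻¹ * x} ⊆ F := by
  obtain ⟨_, ⟨g, rfl⟩, F₀, hF₀, rfl⟩ := hF
  have key : ∀ x ∈ (fun x => x * g) '' F₀, ∀ y : G, x * y⁻¹ ∈ P →
      y ∈ (fun x => x * g) '' F₀ := by
    rintro x ⟨x₀, hx₀, rfl⟩ y hp
    refine ⟨y * g⁻¹, whOmega_hereditary P hF₀ x₀ hx₀ (y * g⁻¹) ?_, by group⟩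
    have : x₀ * (y * g⁻¹)⁻¹ = (x₀ * g) * y⁻¹ := by group
    rw [this]
    exact hp
  refine ⟨key, ?_⟩
  rintro z ⟨p, hp, x, hx, rfl⟩
  refine key x hx (p⁻¹ * x) ?_
  have : x * (p⁻¹ * x)⁻¹ = p := by group
  rw [this]
  exact hp
end

section
/- Let G be a countable group and P ⊆ G a subsemigroup containing the identity e. Suppose that for all g, h ∈ G, the set Pg ∩ Ph is either empty or there exist n ≥ 1 and g₁, …, gₙ ∈ G such that Pg ∩ Ph = ⋃_{i=1}^{n} Pgᵢ (where Pg := {pg : p ∈ P}). Then every element of Ω̃ is directed. -/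
/-- Finite approximation: a member of `Ω` agrees with some `P⁻¹a`, `a ∈ P`, on any
finite set. -/
lemma whOmega_approx {G : Type*} [Group G] (P : Submonoid G) {F : Set G}
    (hF : F ∈ whOmega P) (S : Finset G) :
    ∃ a ∈ P, ∀ s ∈ S, (s ∈ pinvSet P a ↔ s ∈ F) := by
  have h : F.boolIndicator ∈
      closure (Set.boolIndicator '' {F : Set G | ∃ a ∈ P, F = pinvSet P a}) := by
    have := hF
    rw [whOmega, powerSetTopology] at this
    exact closure_induced.mp this
  rw [mem_closure_iff] at h
  have heq : {y : G → Bool | ∀ i ∈ S, y i = F.boolIndicator i}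
      = Set.pi (S : Set G) (fun i => {F.boolIndicator i}) := by
    ext y; simp [Set.mem_pi]
  have hopen : IsOpen {y : G → Bool | ∀ i ∈ S, y i = F.boolIndicator i} := by
    rw [heq]
    exact isOpen_set_pi S.finite_toSet (fun a _ => isOpen_discrete _)
  obtain ⟨y, hyo, hys⟩ := h _ hopen (fun i _ => rfl)
  obtain ⟨F', ⟨a, ha, rfl⟩, hFE⟩ := hys
  refine ⟨a, ha, fun s hs => ?_⟩
  have h1 := hyo s hs
  rw [← hFE] at h1
  rw [Set.mem_iff_boolIndicator, Set.mem_iff_boolIndicator, h1]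

/-- Let `G` be a countable group and `P ⊆ G` a subsemigroup containing
the identity.  Suppose that for all `g, h ∈ G` the set `Pg ∩ Ph` is either empty or a
finite union `⋃_{i=1}^{n} P gᵢ` (with `n ≥ 1`).  Then every element of `Ω̃` is directed:
for `x, y ∈ F` there is `z ∈ F` with `x ≤ z` and `y ≤ z`. -/
theorem whOmegaTilde_directed {G : Type*} [Group G] [Countable G] (P : Submonoid G)
    (hInt : ∀ g h : G,
      ((fun p => p * g) '' (P : Set G)) ∩ ((fun p => p * h) '' (P : Set G)) = ∅ ∨
        ∃ n : ℕ, 1 ≤ n ∧ ∃ gs : Fin n → G,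
          ((fun p => p * g) '' (P : Set G)) ∩ ((fun p => p * h) '' (P : Set G)) =
            ⋃ i : Fin n, (fun p => p * gs i) '' (P : Set G)) :
    ∀ F ∈ whOmegaTilde P, ∀ x ∈ F, ∀ y ∈ F,
      ∃ z ∈ F, z * x⁻¹ ∈ P ∧ z * y⁻¹ ∈ P := by
  classical
  intro F hF x hx y hy
  obtain ⟨_, ⟨g, rfl⟩, F₀, hF₀, rfl⟩ := hF
  obtain ⟨x₀, hx₀, rfl⟩ := hx
  obtain ⟨y₀, hy₀, rfl⟩ := hy
  -- In every case we can find `a ∈ P` with `x₀, y₀ ∈ P⁻¹a`, showing `Px₀ ∩ Py₀ ≠ ∅`.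
  rcases hInt x₀ y₀ with hempty | ⟨n, hn, gs, hunion⟩
  · obtain ⟨a, ha, haS⟩ := whOmega_approx P hF₀ {x₀, y₀}
    have hax : x₀ ∈ pinvSet P a := (haS x₀ (by simp)).mpr hx₀
    have hay : y₀ ∈ pinvSet P a := (haS y₀ (by simp)).mpr hy₀
    have : a ∈ ((fun p => p * x₀) '' (P : Set G)) ∩ ((fun p => p * y₀) '' (P : Set G)) := by
      constructor
      · exact ⟨a * x₀⁻¹, hax, by group⟩
      · exact ⟨a * y₀⁻¹, hay, by group⟩
    rw [hempty] at this
    exact absurd this (Set.notMem_empty a)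
  · obtain ⟨a, ha, haS⟩ := whOmega_approx P hF₀
      (insert x₀ (insert y₀ (Finset.image gs Finset.univ)))
    have hax : x₀ ∈ pinvSet P a := (haS x₀ (by simp)).mpr hx₀
    have hay : y₀ ∈ pinvSet P a := (haS y₀ (by simp)).mpr hy₀
    have hamem : a ∈ ⋃ i : Fin n, (fun p => p * gs i) '' (P : Set G) := by
      rw [← hunion]
      exact ⟨⟨a * x₀⁻¹, hax, by group⟩, ⟨a * y₀⁻¹, hay, by group⟩⟩
    obtain ⟨_, ⟨i, rfl⟩, p, hp, hpa⟩ := hamem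
    -- `gs i ∈ P⁻¹a`, hence `gs i ∈ F₀`.
    have hgi : gs i ∈ pinvSet P a := by
      show a * (gs i)⁻¹ ∈ P
      rw [← hpa]
      simpa using hp
    have hgiF : gs i ∈ F₀ :=
      (haS (gs i) (by simp [Finset.mem_insert, Finset.mem_image])).mp hgi
    -- `gs i ∈ Px₀ ∩ Py₀`.
    have hgimem : gs i ∈
        ((fun p => p * x₀) '' (P : Set G)) ∩ ((fun p => p * y₀) '' (P : Set G)) := by
      rw [hunion]
      exact Set.mem_iUnion.mpr ⟨i, ⟨1, P.one_mem, by simp⟩⟩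
    obtain ⟨⟨p₁, hp₁, hp₁e⟩, ⟨p₂, hp₂, hp₂e⟩⟩ := hgimem
    refine ⟨gs i * g, ⟨gs i, hgiF, rfl⟩, ?_, ?_⟩
    · have : gs i * g * (x₀ * g)⁻¹ = p₁ := by rw [← hp₁e]; group
      rw [this]; exact hp₁
    · have : gs i * g * (y₀ * g)⁻¹ = p₂ := by rw [← hp₂e]; group
      rw [this]; exact hp₂
end

section
/- Let G be a countable group and P ⊆ G a subsemigroup containing the identity e. Then for every F ∈ Ω̃ one has F ∈ Ω if and only if e ∈ F. -/
/-- Bool indicators agree under a membership equivalence. -/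
lemma boolIndicator_congr' {α β : Type*} {s : Set α} {t : Set β} {x : α} {y : β}
    (h : x ∈ s ↔ y ∈ t) : s.boolIndicator x = t.boolIndicator y := by
  by_cases hx : x ∈ s
  · rw [(s.mem_iff_boolIndicator x).mp hx, (t.mem_iff_boolIndicator y).mp (h.mp hx)]
  · rw [(s.notMem_iff_boolIndicator x).mp hx,
      (t.notMem_iff_boolIndicator y).mp (fun ht => hx (h.mpr ht))]

/-- Let `G` be a countable group and `P ⊆ G` a subsemigroup containing
the identity `e`.  For every `F ∈ Ω̃` one has `F ∈ Ω` if and only if `e ∈ F`. -/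
theorem mem_whOmega_iff_one_mem {G : Type*} [Group G] [Countable G] (P : Submonoid G)
    (F : Set G) (hF : F ∈ whOmegaTilde P) :
    F ∈ whOmega P ↔ (1 : G) ∈ F := by
  classical
  letI : TopologicalSpace (Set G) := powerSetTopology G
  have hι : Continuous (fun F : Set G => F.boolIndicator) := continuous_induced_dom
  have heval : Continuous (fun f : G → Bool => f 1) := continuous_apply 1
  have hpre : {F : Set G | (1:G) ∈ F} =
      (fun F : Set G => F.boolIndicator) ⁻¹' ((fun f : G → Bool => f 1) ⁻¹' {true}) := by
    ext A
    simp only [Set.mem_setOf_eq, Set.mem_preimage, Set.mem_singleton_iff]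
    exact A.mem_iff_boolIndicator 1
  have hUopen : IsOpen {F : Set G | (1:G) ∈ F} := by
    rw [hpre]
    exact (heval.comp hι).isOpen_preimage _ (isOpen_discrete _)
  have hUclosed : IsClosed {F : Set G | (1:G) ∈ F} := by
    rw [hpre]
    exact IsClosed.preimage (heval.comp hι) (isClosed_discrete _)
  constructor
  · intro h
    have hsub : whOmega P ⊆ {F : Set G | (1:G) ∈ F} := by
      show closure {F : Set G | ∃ a ∈ P, F = pinvSet P a} ⊆ _
      apply closure_minimal _ hUclosed
      rintro _ ⟨a, ha, rfl⟩
      show a * (1:G)⁻¹ ∈ P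
      simpa using ha
    exact hsub h
  · intro h1
    rw [whOmegaTilde, Set.mem_iUnion] at hF
    obtain ⟨g, F₀, hF₀, rfl⟩ := hF
    set S : Set (Set G) := {F : Set G | ∃ a ∈ P, F = pinvSet P a} with hS
    have hF₀' : F₀ ∈ closure S := hF₀
    have hmem : ∀ (A : Set G) (x : G), (x ∈ (fun y => y * g) '' A) ↔ x * g⁻¹ ∈ A := by
      intro A x
      constructor
      · rintro ⟨y, hy, rfl⟩; simpa using hy
      · intro h; exact ⟨x * g⁻¹, h, by group⟩
    have hc : Continuous (fun A : Set G => (fun y => y * g) '' A) := by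
      refine continuous_induced_rng.mpr ?_
      have heq : (fun A : Set G => ((fun y => y * g) '' A).boolIndicator)
          = fun A : Set G => fun x => A.boolIndicator (x * g⁻¹) := by
        funext A x
        exact boolIndicator_congr' (hmem A x)
      show Continuous (fun A : Set G => ((fun y => y * g) '' A).boolIndicator)
      rw [heq]
      exact continuous_pi fun x => (continuous_apply (x * g⁻¹)).comp hι
    have h2 : (fun y => y * g) '' F₀ ∈
        closure ((fun A : Set G => (fun y => y * g) '' A) '' S) :=
      image_closure_subset_closure_image hc ⟨F₀, hF₀', rfl⟩
    have h3 : (fun y => y * g) '' F₀ ∈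
        closure ({F : Set G | (1:G) ∈ F} ∩ ((fun A : Set G => (fun y => y * g) '' A) '' S)) :=
      hUopen.inter_closure ⟨h1, h2⟩
    show (fun y => y * g) '' F₀ ∈ closure S
    refine closure_mono ?_ h3
    rintro _ ⟨hone, A, ⟨a, ha, rfl⟩, rfl⟩
    refine ⟨a * g, ?_, ?_⟩
    · have h4 : (1:G) * g⁻¹ ∈ pinvSet P a := (hmem _ 1).mp hone
      have : a * ((1:G) * g⁻¹)⁻¹ ∈ P := h4
      simpa using this
    · ext x
      rw [hmem]
      show a * (x * g⁻¹)⁻¹ ∈ P ↔ a * g * x⁻¹ ∈ P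
      rw [mul_inv_rev, inv_inv, ← mul_assoc]
end

section
/- Let G be a countable group and P ⊆ G a subsemigroup containing the identity e. Then Ω is a compact subset of the product space G → Bool, and Ω̃, equipped with the subspace topology, is a locally compact space; indeed, every point of Ω̃ has a compact open neighbourhood in Ω̃ (each Ωg is compact and open in Ω̃). -/
attribute [local instance] powerSetTopology

section Aux

variable {G : Type*}

lemma wh_cont_bi : Continuous (fun F : Set G => F.boolIndicator) := continuous_induced_dom

/-- The power set with the topology of pointwise convergence is homeomorphic to `G → Bool`. -/
noncomputable def whPsHomeo : Set G ≃ₜ (G → Bool) where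
  toFun F := F.boolIndicator
  invFun f := {x | f x = true}
  left_inv F := by ext x; simp [Set.boolIndicator]
  right_inv f := by ext x; simp [Set.boolIndicator]
  continuous_toFun := continuous_induced_dom
  continuous_invFun := by
    apply continuous_induced_rng.mpr
    convert continuous_id using 1
    ext f x
    simp [Set.boolIndicator]

instance : CompactSpace (Set G) := whPsHomeo.symm.compactSpace

/-- Right translation on the power set. -/
def whTau [Group G] (g : G) (F : Set G) : Set G := (fun x => x * g) '' F

lemma mem_whTau [Group G] {g : G} {F : Set G} {y : G} : y ∈ whTau g F ↔ y * g⁻¹ ∈ F := by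
  constructor
  · rintro ⟨x, hx, rfl⟩; simpa using hx
  · intro h; exact ⟨y * g⁻¹, h, by simp⟩

lemma whTau_whTau [Group G] (a b : G) (F : Set G) : whTau a (whTau b F) = whTau (b * a) F := by
  ext y; simp [mem_whTau, mul_assoc]

lemma cont_whTau [Group G] (g : G) : Continuous (whTau g : Set G → Set G) := by
  apply continuous_induced_rng.mpr
  show Continuous fun F : Set G => (whTau g F).boolIndicator
  have : (fun F : Set G => (whTau g F).boolIndicator)
      = fun F y => F.boolIndicator (y * g⁻¹) := by
    ext F y
    simp only [Set.boolIndicator]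
    by_cases h : y * g⁻¹ ∈ F
    · rw [if_pos (mem_whTau.mpr h), if_pos h]
    · rw [if_neg (fun hh => h (mem_whTau.mp hh)), if_neg h]
  rw [this]
  exact continuous_pi fun y => (continuous_apply (y * g⁻¹)).comp wh_cont_bi

lemma whMemSet_clopen (x : G) : IsClopen {F : Set G | x ∈ F} := by
  have h : {F : Set G | x ∈ F} = (fun F : Set G => F.boolIndicator x) ⁻¹' {true} := by
    ext F; exact F.mem_iff_boolIndicator x
  have hc : Continuous fun F : Set G => F.boolIndicator x :=
    (continuous_apply x).comp wh_cont_bi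
  rw [h]
  exact ⟨(isClosed_discrete _).preimage hc, (isOpen_discrete _).preimage hc⟩

variable [Group G] (P : Submonoid G)

lemma whOmegaMul_eq (g : G) : whOmegaMul P g = whTau g '' whOmega P := by
  ext F
  simp only [whOmegaMul, whTau, Set.mem_setOf_eq, Set.mem_image]
  constructor
  · rintro ⟨F₀, h, rfl⟩; exact ⟨F₀, h, rfl⟩
  · rintro ⟨F₀, h, rfl⟩; exact ⟨F₀, h, rfl⟩

lemma whOmega_isCompact : IsCompact (whOmega P) :=
  (isClosed_closure).isCompact

lemma one_mem_of_mem_whOmega {F : Set G} (hF : F ∈ whOmega P) : (1 : G) ∈ F := by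
  have : whOmega P ⊆ {F : Set G | (1 : G) ∈ F} := by
    apply closure_minimal _ (whMemSet_clopen (1 : G)).isClosed
    rintro F ⟨a, ha, rfl⟩
    simpa [pinvSet] using ha
  exact this hF

lemma whTau_mem_whOmega {F : Set G} (hF : F ∈ whOmega P) {x : G} (hx : x ∈ F) :
    whTau x⁻¹ F ∈ whOmega P := by
  have hsub : whOmega P ⊆ {F : Set G | x ∉ F} ∪ (whTau x⁻¹) ⁻¹' (whOmega P) := by
    apply closure_minimal
    · rintro F ⟨a, ha, rfl⟩
      by_cases hx : x ∈ pinvSet P a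
      · right
        have hax : a * x⁻¹ ∈ P := hx
        apply subset_closure
        refine ⟨a * x⁻¹, hax, ?_⟩
        ext y
        simp only [mem_whTau, pinvSet, Set.mem_setOf_eq, inv_inv, mul_inv_rev, mul_assoc]
      · left; exact hx
    · apply IsClosed.union
      · have : {F : Set G | x ∉ F} = {F : Set G | x ∈ F}ᶜ := rfl
        rw [this]
        exact (whMemSet_clopen x).isOpen.isClosed_compl
      · exact isClosed_closure.preimage (cont_whTau x⁻¹)
  rcases hsub hF with h | h
  · exact absurd hx h
  · exact h

end Aux

/-- Let `G` be a countable group and `P ⊆ G` a subsemigroup containing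
the identity.  Then `Ω` is a compact subset of the power set of `G` (with the topology of
pointwise convergence); each `Ωg` is compact and open in the subspace `Ω̃` (i.e. `Ωg` is
the intersection of an open set with `Ω̃`); and every point of `Ω̃` lies in some `Ωg`,
hence has a compact open neighbourhood in `Ω̃`, so `Ω̃` is locally compact. -/
theorem whOmega_compact_and_whOmegaTilde_locally_compact
    {G : Type*} [Group G] [Countable G] (P : Submonoid G) :
    @IsCompact (Set G) (powerSetTopology G) (whOmega P) ∧
      (∀ g : G, @IsCompact (Set G) (powerSetTopology G) (whOmegaMul P g)) ∧
      (∀ g : G, ∃ U : Set (Set G), @IsOpen (Set G) (powerSetTopology G) U ∧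
        whOmegaMul P g = U ∩ whOmegaTilde P) ∧
      (∀ F ∈ whOmegaTilde P, ∃ g : G, F ∈ whOmegaMul P g) := by
  refine ⟨whOmega_isCompact P, ?_, ?_, ?_⟩
  · intro g
    rw [whOmegaMul_eq]
    exact (whOmega_isCompact P).image (cont_whTau g)
  · intro g
    refine ⟨{F : Set G | g ∈ F}, (whMemSet_clopen g).isOpen, ?_⟩
    ext F
    constructor
    · rintro ⟨F₀, hF₀, rfl⟩
      refine ⟨?_, Set.mem_iUnion.mpr ⟨g, F₀, hF₀, rfl⟩⟩
      show g ∈ whTau g F₀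
      rw [mem_whTau]
      simpa using one_mem_of_mem_whOmega P hF₀
    · rintro ⟨hg, hF⟩
      rcases Set.mem_iUnion.mp hF with ⟨h, F₀, hF₀, rfl⟩
      have hg' : g * h⁻¹ ∈ F₀ := by
        have : g ∈ whTau h F₀ := hg
        exact mem_whTau.mp this
      refine ⟨whTau (g * h⁻¹)⁻¹ F₀, whTau_mem_whOmega P hF₀ hg', ?_⟩
      show whTau h F₀ = whTau g (whTau (g * h⁻¹)⁻¹ F₀)
      rw [whTau_whTau, show (g * h⁻¹)⁻¹ * g = h by group]
  · intro F hF
    exact Set.mem_iUnion.mp hF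
end
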